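/- Consider ℝ² with the Euclidean metric and the measure μ = λ₁ + λ₂, where λ₁ is one-dimensional Lebesgue measure on the segment A = [0,1] × {0} and λ₂ is two-dimensional Lebesgue measure on ℝ². Define f = Σ_{n=1}^∞ 2^n 𝟙_{S_n}, where S_n = [0,1] × (2^{−n²}, 2^{−n²+1}). Then f ∈ L¹(μ) with ‖f‖_{L¹(μ)} ≤ 2, f has compact support, and the noncentered maximal function M̃f (with respect to μ) satisfies M̃f(x, 0) = ∞ for all x ∈ [0,1], while M̃f(x,y) < ∞ whenever (x,y) ∉ A. -/

import Mathlib

open MeasureTheory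
open scoped ENNReal

/-- The point `(a, b)` of the Euclidean plane. -/
noncomputable def pt9 (a b : ℝ) : EuclideanSpace ℝ (Fin 2) := WithLp.toLp 2 ![a, b]

/-- The measure `μ = λ₁ + λ₂`, where `λ₁` is one-dimensional Lebesgue measure on the
segment `[0,1] × {0}` and `λ₂` is two-dimensional Lebesgue measure on the plane. -/
noncomputable def μ9 : Measure (EuclideanSpace ℝ (Fin 2)) :=
  Measure.map (fun t : ℝ => pt9 t 0) (volume.restrict (Set.Icc (0 : ℝ) 1)) + volume

/-- The segment `A = [0,1] × {0}`. -/
def A9 : Set (EuclideanSpace ℝ (Fin 2)) := {z | z 0 ∈ Set.Icc (0 : ℝ) 1 ∧ z 1 = 0}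

/-- The strip `S_n = [0,1] × (2^{−n²}, 2^{−n²+1})`. -/
noncomputable def S9 (n : ℕ) : Set (EuclideanSpace ℝ (Fin 2)) :=
  {z | z 0 ∈ Set.Icc (0 : ℝ) 1 ∧
    z 1 ∈ Set.Ioo ((2 : ℝ) ^ (-(n : ℝ) ^ 2)) ((2 : ℝ) ^ (-(n : ℝ) ^ 2 + 1))}

/-- The function `f = Σ_{n=1}^∞ 2^n 𝟙_{S_n}`. -/
noncomputable def f9 : EuclideanSpace ℝ (Fin 2) → ℝ :=
  fun z => ∑' n : ℕ, Set.indicator (S9 (n + 1)) (fun _ => (2 : ℝ) ^ ((n : ℝ) + 1)) z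

/-- The noncentered Hardy–Littlewood maximal function of `f9` with respect to `μ9`. -/
noncomputable def M9 (x : EuclideanSpace ℝ (Fin 2)) : ℝ≥0∞ :=
  ⨆ (z : EuclideanSpace ℝ (Fin 2)) (s : ℝ) (_ : x ∈ Metric.ball z s),
    (μ9 (Metric.ball z s))⁻¹ * ∫⁻ y in Metric.ball z s, ENNReal.ofReal |f9 y| ∂μ9

lemma pt9_0 (a b : ℝ) : pt9 a b 0 = a := rfl
lemma pt9_1 (a b : ℝ) : pt9 a b 1 = b := rfl

lemma measurable_coord (i : Fin 2) : Measurable fun z : EuclideanSpace ℝ (Fin 2) => z i := by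
  exact (EuclideanSpace.proj i).continuous.measurable

lemma dist_E2 (z w : EuclideanSpace ℝ (Fin 2)) :
    dist z w = Real.sqrt ((z 0 - w 0)^2 + (z 1 - w 1)^2) := by
  rw [EuclideanSpace.dist_eq, Fin.sum_univ_two]
  simp [Real.dist_eq, sq_abs]

lemma rect_measurable {s t : Set ℝ} (hs : MeasurableSet s) (ht : MeasurableSet t) :
    MeasurableSet {z : EuclideanSpace ℝ (Fin 2) | z 0 ∈ s ∧ z 1 ∈ t} :=
  ((measurable_coord 0 hs).inter (measurable_coord 1 ht))

lemma rect_volume {s t : Set ℝ} (hs : MeasurableSet s) (ht : MeasurableSet t) :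
    volume {z : EuclideanSpace ℝ (Fin 2) | z 0 ∈ s ∧ z 1 ∈ t} = volume s * volume t := by
  have e := EuclideanSpace.volume_preserving_symm_measurableEquiv_toLp (Fin 2)
  have h1 : {z : EuclideanSpace ℝ (Fin 2) | z 0 ∈ s ∧ z 1 ∈ t}
      = (MeasurableEquiv.toLp 2 (Fin 2 → ℝ)).symm ⁻¹' {p : Fin 2 → ℝ | p 0 ∈ s ∧ p 1 ∈ t} := rfl
  have h2 : {p : Fin 2 → ℝ | p 0 ∈ s ∧ p 1 ∈ t} = Set.univ.pi ![s, t] := by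
    ext p
    simp [Set.mem_pi, Fin.forall_fin_two]
  rw [h1, e.measure_preimage, h2, volume_pi_pi, Fin.prod_univ_two]
  · simp
  · rw [h2]
    exact (MeasurableSet.univ_pi (by simp [Fin.forall_fin_two, hs, ht])).nullMeasurableSet

lemma measurable_line : Measurable fun t : ℝ => pt9 t 0 := by
  refine (MeasurableEquiv.toLp 2 (Fin 2 → ℝ)).measurable.comp (f := fun t : ℝ => ![t, 0]) (measurable_pi_lambda _ ?_)
  intro i
  fin_cases i
  · exact measurable_id
  · exact measurable_const

lemma S9_measurable (n : ℕ) : MeasurableSet (S9 n) :=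
  rect_measurable measurableSet_Icc measurableSet_Ioo

lemma S9_volume (n : ℕ) : volume (S9 n) = ENNReal.ofReal ((2:ℝ) ^ (-(n : ℝ) ^ 2)) := by
  rw [S9, rect_volume measurableSet_Icc measurableSet_Ioo]
  rw [Real.volume_Icc, Real.volume_Ioo]
  have h : (2:ℝ) ^ (-(n : ℝ) ^ 2 + 1) - (2:ℝ) ^ (-(n : ℝ) ^ 2) = (2:ℝ) ^ (-(n : ℝ) ^ 2) := by
    rw [Real.rpow_add (by norm_num), Real.rpow_one]
    ring
  rw [h]
  simp

-- disjointness: if m < k then strips S9 m, S9 k are disjoint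
lemma S9_disj {m k : ℕ} (h : m < k) {z : EuclideanSpace ℝ (Fin 2)}
    (hz : z ∈ S9 k) : z ∉ S9 m := by
  intro hm
  have h1 : (2:ℝ) ^ (-(k : ℝ) ^ 2 + 1) ≤ (2:ℝ) ^ (-(m : ℝ) ^ 2) := by
    apply Real.rpow_le_rpow_of_exponent_le (by norm_num : (1:ℝ) ≤ 2)
    have hk : m + 1 ≤ k := h
    have h2 : (m:ℝ) + 1 ≤ (k:ℝ) := by exact_mod_cast hk
    have h3 : (0:ℝ) ≤ (m:ℝ) := Nat.cast_nonneg m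
    nlinarith [sq_nonneg ((m:ℝ) + 1)]
  have := hz.2.2
  have := hm.2.1
  linarith

lemma S9_ne {m k : ℕ} (h : m ≠ k) {z : EuclideanSpace ℝ (Fin 2)}
    (hz : z ∈ S9 k) : z ∉ S9 m := by
  rcases lt_or_gt_of_ne h with h' | h'
  · exact S9_disj h' hz
  · intro hm; exact S9_disj h' hm hz

lemma f9_on_strip {k : ℕ} {z : EuclideanSpace ℝ (Fin 2)} (hz : z ∈ S9 (k + 1)) :
    f9 z = (2:ℝ) ^ ((k : ℝ) + 1) := by
  rw [f9]
  rw [tsum_eq_single k]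
  · rw [Set.indicator_of_mem hz]
  · intro n hn
    rw [Set.indicator_of_notMem (S9_ne (by omega) hz)]

lemma f9_off {z : EuclideanSpace ℝ (Fin 2)} (hz : ∀ k, z ∉ S9 (k + 1)) : f9 z = 0 := by
  rw [f9]
  have : ∀ n : ℕ, Set.indicator (S9 (n + 1)) (fun _ => (2 : ℝ) ^ ((n : ℝ) + 1)) z = 0 :=
    fun n => Set.indicator_of_notMem (hz n) _
  rw [tsum_congr this, tsum_zero]

lemma f9_nonneg (z : EuclideanSpace ℝ (Fin 2)) : 0 ≤ f9 z := by
  by_cases h : ∃ k, z ∈ S9 (k + 1)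
  · obtain ⟨k, hk⟩ := h
    rw [f9_on_strip hk]
    positivity
  · push_neg at h
    rw [f9_off h]

/-- The ENNReal version of `f9` (as a tsum of ENNReal indicators). -/
noncomputable def F9 : EuclideanSpace ℝ (Fin 2) → ℝ≥0∞ :=
  fun z => ∑' n : ℕ, Set.indicator (S9 (n + 1))
    (fun _ => ENNReal.ofReal ((2 : ℝ) ^ ((n : ℝ) + 1))) z

lemma F9_eq (z : EuclideanSpace ℝ (Fin 2)) : ENNReal.ofReal |f9 z| = F9 z := by
  by_cases h : ∃ k, z ∈ S9 (k + 1)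
  · obtain ⟨k, hk⟩ := h
    rw [f9_on_strip hk, F9, tsum_eq_single k]
    · rw [Set.indicator_of_mem hk, abs_of_nonneg (by positivity)]
    · intro n hn
      rw [Set.indicator_of_notMem (S9_ne (by omega) hk)]
  · push_neg at h
    rw [f9_off h]
    simp only [F9]
    have : ∀ n : ℕ, Set.indicator (S9 (n + 1))
        (fun _ => ENNReal.ofReal ((2 : ℝ) ^ ((n : ℝ) + 1))) z = 0 :=
      fun n => Set.indicator_of_notMem (h n) _
    rw [tsum_congr this, tsum_zero]
    simp

lemma F9_measurable : Measurable F9 := by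
  unfold F9
  exact Measurable.ennreal_tsum fun n => (measurable_const.indicator (S9_measurable (n+1)))

lemma f9_measurable : Measurable f9 := by
  have : f9 = fun z => (F9 z).toReal := by
    funext z
    rw [← F9_eq z, ENNReal.toReal_ofReal (abs_nonneg _), abs_of_nonneg (f9_nonneg z)]
  rw [this]
  exact F9_measurable.ennreal_toReal

lemma map_line_apply {B : Set (EuclideanSpace ℝ (Fin 2))} (hB : MeasurableSet B) :
    Measure.map (fun t : ℝ => pt9 t 0) (volume.restrict (Set.Icc (0 : ℝ) 1)) B
      = volume ((fun t : ℝ => pt9 t 0) ⁻¹' B ∩ Set.Icc (0:ℝ) 1) := by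
  rw [Measure.map_apply measurable_line hB, Measure.restrict_apply (measurable_line hB)]

lemma map_line_S9 (k : ℕ) :
    Measure.map (fun t : ℝ => pt9 t 0) (volume.restrict (Set.Icc (0 : ℝ) 1)) (S9 k) = 0 := by
  rw [map_line_apply (S9_measurable k)]
  convert measure_empty (μ := (volume : Measure ℝ))
  rw [Set.eq_empty_iff_forall_notMem]
  rintro t ⟨ht, -⟩
  have h0 : (0:ℝ) < (2:ℝ) ^ (-(k : ℝ) ^ 2) := Real.rpow_pos_of_pos (by norm_num) _
  have h2 : (2:ℝ) ^ (-(k : ℝ) ^ 2) < pt9 t 0 1 := ht.2.1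
  rw [pt9_1] at h2
  linarith

lemma μ9_S9 (k : ℕ) : μ9 (S9 k) = ENNReal.ofReal ((2:ℝ) ^ (-(k : ℝ) ^ 2)) := by
  rw [μ9, Measure.add_apply, map_line_S9, S9_volume, zero_add]

lemma μ9_apply {B : Set (EuclideanSpace ℝ (Fin 2))} (hB : MeasurableSet B) :
    μ9 B = volume ((fun t : ℝ => pt9 t 0) ⁻¹' B ∩ Set.Icc (0:ℝ) 1) + volume B := by
  rw [μ9, Measure.add_apply, map_line_apply hB]

lemma lintegral_f9 {B : Set (EuclideanSpace ℝ (Fin 2))} (hB : MeasurableSet B) :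
    ∫⁻ y in B, ENNReal.ofReal |f9 y| ∂μ9
      = ∑' n : ℕ, ENNReal.ofReal ((2:ℝ) ^ ((n : ℝ) + 1)) * μ9 (S9 (n + 1) ∩ B) := by
  have h1 : ∀ y, ENNReal.ofReal |f9 y| = F9 y := F9_eq
  simp only [h1, F9]
  rw [lintegral_tsum (fun n => (measurable_const.indicator (S9_measurable (n+1))).aemeasurable)]
  congr 1
  funext n
  rw [lintegral_indicator (S9_measurable (n+1)), setLIntegral_const,
    Measure.restrict_apply (S9_measurable (n+1))]

lemma term_le (n : ℕ) :
    ENNReal.ofReal ((2:ℝ) ^ ((n : ℝ) + 1)) * ENNReal.ofReal ((2:ℝ) ^ (-((n:ℝ) + 1) ^ 2))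
      ≤ ENNReal.ofReal ((1/2 : ℝ) ^ n) := by
  rw [← ENNReal.ofReal_mul (by positivity), ← Real.rpow_add (by norm_num)]
  apply ENNReal.ofReal_le_ofReal
  have h : ((n : ℝ) + 1 + -((n:ℝ) + 1) ^ 2) ≤ -(n:ℝ) := by nlinarith [(Nat.cast_nonneg n : (0:ℝ) ≤ (n:ℝ))]
  calc (2:ℝ) ^ ((n : ℝ) + 1 + -((n:ℝ) + 1) ^ 2) ≤ (2:ℝ) ^ (-(n:ℝ)) :=
        Real.rpow_le_rpow_of_exponent_le (by norm_num) h
    _ = (1/2 : ℝ) ^ n := by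
        rw [Real.rpow_neg (by norm_num), Real.rpow_natCast, one_div, inv_pow]

lemma tsum_half_le : ∑' n : ℕ, ENNReal.ofReal ((1/2 : ℝ) ^ n) = 2 := by
  rw [← ENNReal.ofReal_tsum_of_nonneg (fun n => by positivity)
        (summable_geometric_of_lt_one (by norm_num : (0:ℝ) ≤ 1/2) (by norm_num)), tsum_geometric_two]
  norm_num

lemma lintegral_f9_total_le : (∫⁻ z, ENNReal.ofReal |f9 z| ∂μ9) ≤ 2 := by
  have h := lintegral_f9 (B := Set.univ) MeasurableSet.univ
  rw [setLIntegral_univ] at h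
  rw [h]
  have hterm : ∀ n : ℕ, ENNReal.ofReal ((2:ℝ) ^ ((n : ℝ) + 1)) * μ9 (S9 (n + 1) ∩ Set.univ)
      ≤ ENNReal.ofReal ((1/2 : ℝ) ^ n) := by
    intro n
    rw [Set.inter_univ, μ9_S9]
    have : (((n+1 : ℕ)) : ℝ) = (n:ℝ) + 1 := by push_cast; ring
    rw [this]
    exact term_le n
  calc ∑' n : ℕ, ENNReal.ofReal ((2:ℝ) ^ ((n : ℝ) + 1)) * μ9 (S9 (n + 1) ∩ Set.univ)
      ≤ ∑' n : ℕ, ENNReal.ofReal ((1/2 : ℝ) ^ n) := ENNReal.tsum_le_tsum hterm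
    _ = 2 := tsum_half_le

lemma f9_integrable : Integrable f9 μ9 := by
  refine ⟨f9_measurable.aestronglyMeasurable, ?_⟩
  rw [hasFiniteIntegral_iff_norm]
  have : ∀ z, ENNReal.ofReal ‖f9 z‖ = ENNReal.ofReal |f9 z| := by
    intro z; rw [Real.norm_eq_abs]
  simp only [this]
  exact lt_of_le_of_lt lintegral_f9_total_le (by norm_num)

lemma S9_subset (k : ℕ) (hk : 1 ≤ k) :
    S9 k ⊆ {z : EuclideanSpace ℝ (Fin 2) | z 0 ∈ Set.Icc (0:ℝ) 1 ∧ z 1 ∈ Set.Icc (0:ℝ) 1} := by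
  rintro z ⟨h0, h1⟩
  refine ⟨h0, ?_, ?_⟩
  · have : (0:ℝ) < (2:ℝ) ^ (-(k : ℝ) ^ 2) := Real.rpow_pos_of_pos (by norm_num) _
    have := h1.1
    linarith
  · have hle : (2:ℝ) ^ (-(k : ℝ) ^ 2 + 1) ≤ 1 := by
      rw [show (1:ℝ) = (2:ℝ) ^ (0:ℝ) by simp]
      apply Real.rpow_le_rpow_of_exponent_le (by norm_num)
      have : (1:ℝ) ≤ (k:ℝ) := by exact_mod_cast hk
      nlinarith
    have := h1.2
    linarith

lemma f9_compact_support : HasCompactSupport f9 := by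
  apply HasCompactSupport.intro (K := {z : EuclideanSpace ℝ (Fin 2) |
      z 0 ∈ Set.Icc (0:ℝ) 1 ∧ z 1 ∈ Set.Icc (0:ℝ) 1})
  · apply (isCompact_closedBall (0 : EuclideanSpace ℝ (Fin 2)) 2).of_isClosed_subset
    · exact IsClosed.inter (isClosed_Icc.preimage (EuclideanSpace.proj (0 : Fin 2)).continuous)
        (isClosed_Icc.preimage (EuclideanSpace.proj (1 : Fin 2)).continuous)
    · rintro z ⟨h0, h1⟩
      rw [Metric.mem_closedBall, dist_E2]
      have : (z 0 - 0)^2 + (z 1 - 0)^2 ≤ 4 := by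
        have := h0.1; have := h0.2; have := h1.1; have := h1.2
        nlinarith
      calc Real.sqrt ((z 0 - 0)^2 + (z 1 - 0)^2) ≤ Real.sqrt 4 := Real.sqrt_le_sqrt this
        _ = 2 := by rw [show (4:ℝ) = 2^2 by norm_num, Real.sqrt_sq (by norm_num)]
  · intro z hz
    apply f9_off
    intro k hk
    exact hz (S9_subset (k+1) (by omega) hk)

lemma S9_eq (n : ℕ) : S9 (n+1) = {z : EuclideanSpace ℝ (Fin 2) | z 0 ∈ Set.Icc (0:ℝ) 1 ∧
    z 1 ∈ Set.Ioo ((2:ℝ) ^ (-((n:ℝ)+1)^2)) (2 * (2:ℝ) ^ (-((n:ℝ)+1)^2))} := by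
  have hc : ((n+1 : ℕ) : ℝ) = (n:ℝ) + 1 := by push_cast; ring
  have h2 : (2:ℝ) ^ (-((n:ℝ)+1)^2 + 1) = 2 * (2:ℝ) ^ (-((n:ℝ)+1)^2) := by
    rw [Real.rpow_add (by norm_num), Real.rpow_one]; ring
  rw [S9, hc, h2]

lemma h_pos (n : ℕ) : (0:ℝ) < (2:ℝ) ^ (-((n:ℝ)+1)^2) := Real.rpow_pos_of_pos (by norm_num) _

lemma h_le_half (n : ℕ) : (2:ℝ) ^ (-((n:ℝ)+1)^2) ≤ 1/2 := by
  rw [show (1/2 : ℝ) = (2:ℝ) ^ (-1 : ℝ) by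
    rw [Real.rpow_neg_one]; norm_num]
  apply Real.rpow_le_rpow_of_exponent_le (by norm_num)
  nlinarith [(Nat.cast_nonneg n : (0:ℝ) ≤ (n:ℝ))]

set_option maxHeartbeats 1000000 in
lemma M9_lower {x : ℝ} (hx : x ∈ Set.Icc (0:ℝ) 1) (n : ℕ) :
    ENNReal.ofReal ((2:ℝ) ^ ((n:ℝ)+1) / 17) ≤ M9 (pt9 x 0) := by
  set h : ℝ := (2:ℝ) ^ (-((n:ℝ)+1)^2) with hh
  have hhpos : 0 < h := h_pos n
  have hhhalf : h ≤ 1/2 := h_le_half n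
  set w : ℝ := (2:ℝ) ^ ((n:ℝ)+1) with hw
  have hwpos : 0 < w := Real.rpow_pos_of_pos (by norm_num) _
  set s : ℝ := 3*h/2 + h^3/16 with hs
  have hspos : 0 < s := by positivity
  have hh2 : h^2 ≤ 1 := by nlinarith [hhpos, hhhalf]
  have hh3 : h^3 ≤ h := by nlinarith [mul_nonneg (le_of_lt hhpos) (sub_nonneg.mpr hh2)]
  have hs2h : s ≤ 2*h := by simp only [hs]; linarith
  set a : ℝ := min x (1-h) with ha
  have ha0 : 0 ≤ a := le_min hx.1 (by linarith)
  have ha1 : a + h ≤ 1 := by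
    have : a ≤ 1 - h := min_le_right _ _
    linarith
  have hax : x - h ≤ a ∧ a ≤ x := ⟨le_min (by linarith) (by linarith [hx.2]), min_le_left _ _⟩
  set R : Set (EuclideanSpace ℝ (Fin 2)) :=
    {z | z 0 ∈ Set.Ioo a (a+h) ∧ z 1 ∈ Set.Ioo h (2*h)} with hR
  set B : Set (EuclideanSpace ℝ (Fin 2)) := Metric.ball (pt9 x (3*h/2)) s with hB
  -- membership of (x,0)
  have hmem : pt9 x 0 ∈ B := by
    rw [hB, Metric.mem_ball, dist_E2, pt9_0, pt9_1, pt9_0, pt9_1]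
    rw [Real.sqrt_lt' hspos]
    nlinarith [mul_pos hhpos (mul_pos hhpos hhpos)]
  -- R ⊆ S9 (n+1)
  have hRS : R ⊆ S9 (n+1) := by
    rintro z ⟨h0, h1⟩
    rw [S9_eq]
    exact ⟨⟨by linarith [h0.1], by linarith [h0.2]⟩, h1⟩
  -- R ⊆ B
  have hRB : R ⊆ B := by
    rintro z ⟨h0, h1⟩
    rw [hB, Metric.mem_ball, dist_E2, pt9_0, pt9_1]
    rw [Real.sqrt_lt' hspos]
    have e0 : (z 0 - x)^2 < h^2 := by
      have l1 : x - h < z 0 := lt_of_le_of_lt (by linarith [hax.1]) h0.1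
      have l2 : z 0 < x + h := lt_of_lt_of_le h0.2 (by linarith [hax.2])
      nlinarith
    have e1 : (z 1 - 3*h/2)^2 ≤ (h/2)^2 := by
      have := h1.1; have := h1.2; nlinarith
    nlinarith [mul_pos hhpos hhpos]
  -- volume of R
  have hvolR : volume R = ENNReal.ofReal (h^2) := by
    rw [hR, rect_volume measurableSet_Ioo measurableSet_Ioo, Real.volume_Ioo, Real.volume_Ioo,
      ← ENNReal.ofReal_mul (by linarith)]
    congr 1
    ring
  -- numerator lower bound
  have hnum : ENNReal.ofReal w * ENNReal.ofReal (h^2)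
      ≤ ∫⁻ y in B, ENNReal.ofReal |f9 y| ∂μ9 := by
    have m1 : ENNReal.ofReal w * ENNReal.ofReal (h^2)
        = ∫⁻ _ in R, ENNReal.ofReal w ∂(volume : Measure (EuclideanSpace ℝ (Fin 2))) := by
      rw [setLIntegral_const, hvolR]
    have m2 : (∫⁻ _ in R, ENNReal.ofReal w ∂(volume : Measure (EuclideanSpace ℝ (Fin 2))))
        ≤ ∫⁻ y in R, ENNReal.ofReal |f9 y| ∂(volume : Measure (EuclideanSpace ℝ (Fin 2))) := by
      apply setLIntegral_mono (by
        have : (fun y => ENNReal.ofReal |f9 y|) = F9 := funext F9_eq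
        rw [this]; exact F9_measurable)
      intro y hy
      rw [f9_on_strip (hRS hy), abs_of_nonneg (le_of_lt hwpos)]
    have m3 : (∫⁻ y in R, ENNReal.ofReal |f9 y| ∂(volume : Measure (EuclideanSpace ℝ (Fin 2))))
        ≤ ∫⁻ y in B, ENNReal.ofReal |f9 y| ∂(volume : Measure (EuclideanSpace ℝ (Fin 2))) :=
      lintegral_mono_set hRB
    have m4 : (∫⁻ y in B, ENNReal.ofReal |f9 y| ∂(volume : Measure (EuclideanSpace ℝ (Fin 2))))
        ≤ ∫⁻ y in B, ENNReal.ofReal |f9 y| ∂μ9 := by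
      apply lintegral_mono'
      · exact Measure.restrict_mono subset_rfl (Measure.le_add_left le_rfl)
      · exact le_rfl
    calc ENNReal.ofReal w * ENNReal.ofReal (h^2) = _ := m1
      _ ≤ _ := m2
      _ ≤ _ := m3
      _ ≤ _ := m4
  clear_value h w s a
  -- denominator upper bound
  have hden : μ9 B ≤ ENNReal.ofReal (17 * h^2) := by
    rw [μ9_apply measurableSet_ball]
    have d1 : volume ((fun t : ℝ => pt9 t 0) ⁻¹' B ∩ Set.Icc (0:ℝ) 1)
        ≤ ENNReal.ofReal (h^2) := by
      have hsub : (fun t : ℝ => pt9 t 0) ⁻¹' B ∩ Set.Icc (0:ℝ) 1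
          ⊆ Set.Ioo (x - h^2/2) (x + h^2/2) := by
        rintro t ⟨ht, -⟩
        simp only [Set.mem_preimage, hB, Metric.mem_ball] at ht
        rw [dist_E2, pt9_0, pt9_1, pt9_0, pt9_1, Real.sqrt_lt' hspos] at ht
        have h6 : h^6 ≤ h^4 := by
          nlinarith [mul_nonneg (pow_nonneg (le_of_lt hhpos) 4) (sub_nonneg.mpr hh2)]
        have expand : s^2 - (3*h/2)^2 = 3*h^4/16 + h^6/256 := by simp only [hs]; ring
        have hq : (h^2/2)^2 = h^4/4 := by ring
        have e : (t - x)^2 < (h^2/2)^2 := by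
          rw [hq]
          linarith [ht, expand, h6, pow_nonneg (le_of_lt hhpos) 4]
        have := abs_lt_of_sq_lt_sq' e (by positivity)
        constructor <;> [linarith [this.1]; linarith [this.2]]
      calc volume ((fun t : ℝ => pt9 t 0) ⁻¹' B ∩ Set.Icc (0:ℝ) 1)
          ≤ volume (Set.Ioo (x - h^2/2) (x + h^2/2)) := measure_mono hsub
        _ = ENNReal.ofReal (h^2) := by rw [Real.volume_Ioo]; congr 1; ring
    have d2 : volume B ≤ ENNReal.ofReal (16 * h^2) := by
      have hsub : B ⊆ {z : EuclideanSpace ℝ (Fin 2) |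
          z 0 ∈ Set.Ioo (x - s) (x + s) ∧ z 1 ∈ Set.Ioo (3*h/2 - s) (3*h/2 + s)} := by
        intro z hz
        rw [hB, Metric.mem_ball, dist_E2, pt9_0, pt9_1, Real.sqrt_lt' hspos] at hz
        have e0 : (z 0 - x)^2 < s^2 := by nlinarith [sq_nonneg (z 1 - 3*h/2)]
        have e1 : (z 1 - 3*h/2)^2 < s^2 := by nlinarith [sq_nonneg (z 0 - x)]
        have a0 := abs_lt_of_sq_lt_sq' e0 (le_of_lt hspos)
        have a1 := abs_lt_of_sq_lt_sq' e1 (le_of_lt hspos)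
        exact ⟨⟨by linarith [a0.1], by linarith [a0.2]⟩, ⟨by linarith [a1.1], by linarith [a1.2]⟩⟩
      calc volume B ≤ _ := measure_mono hsub
        _ = ENNReal.ofReal (x + s - (x - s)) * ENNReal.ofReal (3*h/2 + s - (3*h/2 - s)) := by
            rw [rect_volume measurableSet_Ioo measurableSet_Ioo, Real.volume_Ioo, Real.volume_Ioo]
        _ ≤ ENNReal.ofReal (16 * h^2) := by
            rw [← ENNReal.ofReal_mul (by linarith)]
            apply ENNReal.ofReal_le_ofReal
            have hss : s * s ≤ (2*h) * (2*h) :=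
              mul_le_mul hs2h hs2h (le_of_lt hspos) (by linarith)
            nlinarith [hss]
    calc volume ((fun t : ℝ => pt9 t 0) ⁻¹' B ∩ Set.Icc (0:ℝ) 1) + volume B
        ≤ ENNReal.ofReal (h^2) + ENNReal.ofReal (16 * h^2) := add_le_add d1 d2
      _ = ENNReal.ofReal (17 * h^2) := by
          rw [← ENNReal.ofReal_add (by positivity) (by positivity)]; congr 1; ring
  -- combine
  have hratio : ENNReal.ofReal (w / 17)
      ≤ (μ9 B)⁻¹ * ∫⁻ y in B, ENNReal.ofReal |f9 y| ∂μ9 := by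
    have h17ne : ENNReal.ofReal (17 * h^2) ≠ 0 := by
      simp only [ne_eq, ENNReal.ofReal_eq_zero, not_le]; positivity
    have hkey2 : ENNReal.ofReal (w / 17) * ENNReal.ofReal (17 * h^2)
        = ENNReal.ofReal w * ENNReal.ofReal (h^2) := by
      rw [← ENNReal.ofReal_mul (by positivity), ← ENNReal.ofReal_mul (le_of_lt hwpos)]
      congr 1; ring
    have key : ENNReal.ofReal (w / 17)
        ≤ (ENNReal.ofReal (17 * h^2))⁻¹ * (ENNReal.ofReal w * ENNReal.ofReal (h^2)) := by
      rw [← hkey2, mul_comm (ENNReal.ofReal (w / 17)) _, ← mul_assoc,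
        ENNReal.inv_mul_cancel h17ne ENNReal.ofReal_ne_top, one_mul]
    calc ENNReal.ofReal (w / 17) ≤ _ := key
      _ ≤ (μ9 B)⁻¹ * ∫⁻ y in B, ENNReal.ofReal |f9 y| ∂μ9 :=
          mul_le_mul' (ENNReal.inv_le_inv.mpr hden) hnum
  calc ENNReal.ofReal (w / 17) ≤ _ := hratio
    _ ≤ M9 (pt9 x 0) := by
      rw [M9]
      apply le_iSup_of_le (pt9 x (3*h/2))
      apply le_iSup_of_le s
      exact le_iSup_of_le hmem le_rfl

lemma M9_top {x : ℝ} (hx : x ∈ Set.Icc (0:ℝ) 1) : M9 (pt9 x 0) = ⊤ := by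
  apply ENNReal.eq_top_of_forall_nnreal_le
  intro r
  obtain ⟨n, hn⟩ := exists_nat_ge (17 * (r:ℝ))
  have h1 : (n:ℝ) ≤ (2:ℝ) ^ ((n:ℝ)+1) := by
    have h2 : (n:ℝ) < (2:ℝ) ^ (n:ℕ) := by
      exact_mod_cast Nat.lt_two_pow_self
    have h3 : (2:ℝ) ^ (n:ℕ) = (2:ℝ) ^ ((n:ℝ)) := by
      rw [← Real.rpow_natCast]
    have h4 : (2:ℝ) ^ ((n:ℝ)) ≤ (2:ℝ) ^ ((n:ℝ)+1) :=
      Real.rpow_le_rpow_of_exponent_le (by norm_num) (by linarith)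
    linarith
  calc (r : ℝ≥0∞) ≤ ENNReal.ofReal ((2:ℝ)^((n:ℝ)+1)/17) := by
        rw [← ENNReal.ofReal_coe_nnreal]
        apply ENNReal.ofReal_le_ofReal
        have : (r:ℝ) ≤ (n:ℝ)/17 := by linarith
        linarith
    _ ≤ M9 (pt9 x 0) := M9_lower hx n

lemma vol_le_μ9 (B : Set (EuclideanSpace ℝ (Fin 2))) : volume B ≤ μ9 B := by
  rw [μ9, Measure.add_apply]
  exact le_add_self

lemma μ9_ball_ne_zero {c : EuclideanSpace ℝ (Fin 2)} {s : ℝ} (hs : 0 < s) :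
    μ9 (Metric.ball c s) ≠ 0 := by
  have h := Metric.measure_ball_pos (volume : Measure (EuclideanSpace ℝ (Fin 2))) c hs
  exact fun h0 => (lt_of_lt_of_le h (vol_le_μ9 _)).ne' h0

lemma μ9_ball_ne_top (c : EuclideanSpace ℝ (Fin 2)) (s : ℝ) :
    μ9 (Metric.ball c s) ≠ ⊤ := by
  rw [μ9, Measure.add_apply]
  have h1 : Measure.map (fun t : ℝ => pt9 t 0) (volume.restrict (Set.Icc (0 : ℝ) 1))
      (Metric.ball c s) ≤ 1 := by
    have ha : Measure.map (fun t : ℝ => pt9 t 0) (volume.restrict (Set.Icc (0 : ℝ) 1))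
        (Metric.ball c s) ≤ Measure.map (fun t : ℝ => pt9 t 0)
          (volume.restrict (Set.Icc (0 : ℝ) 1)) Set.univ := measure_mono (Set.subset_univ _)
    have hb : Measure.map (fun t : ℝ => pt9 t 0) (volume.restrict (Set.Icc (0 : ℝ) 1))
        Set.univ = 1 := by
      rw [Measure.map_apply measurable_line MeasurableSet.univ, Set.preimage_univ,
        Measure.restrict_apply MeasurableSet.univ, Set.univ_inter, Real.volume_Icc]
      norm_num
    rw [hb] at ha
    exact ha
  exact ENNReal.add_ne_top.mpr ⟨(lt_of_le_of_lt h1 (by norm_num)).ne,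
    measure_ball_lt_top.ne⟩

lemma box_subset_ball (c : EuclideanSpace ℝ (Fin 2)) {s : ℝ} (hs : 0 < s) :
    {z : EuclideanSpace ℝ (Fin 2) | z 0 ∈ Set.Ioo (c 0 - s/2) (c 0 + s/2) ∧
      z 1 ∈ Set.Ioo (c 1 - s/2) (c 1 + s/2)} ⊆ Metric.ball c s := by
  rintro z ⟨h0, h1⟩
  rw [Metric.mem_ball, dist_E2, Real.sqrt_lt' hs]
  have e0 : (z 0 - c 0)^2 < (s/2)^2 := by
    have := h0.1; have := h0.2; nlinarith
  have e1 : (z 1 - c 1)^2 < (s/2)^2 := by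
    have := h1.1; have := h1.2; nlinarith
  nlinarith

lemma vol_ball_ge {c : EuclideanSpace ℝ (Fin 2)} {s : ℝ} (hs : 0 < s) :
    ENNReal.ofReal (s^2) ≤ volume (Metric.ball c s) := by
  calc ENNReal.ofReal (s^2)
      = volume {z : EuclideanSpace ℝ (Fin 2) | z 0 ∈ Set.Ioo (c 0 - s/2) (c 0 + s/2) ∧
        z 1 ∈ Set.Ioo (c 1 - s/2) (c 1 + s/2)} := by
        rw [rect_volume measurableSet_Ioo measurableSet_Ioo, Real.volume_Ioo, Real.volume_Ioo,
          ← ENNReal.ofReal_mul (by linarith)]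
        congr 1; ring
    _ ≤ volume (Metric.ball c s) := measure_mono (box_subset_ball c hs)

set_option maxHeartbeats 1000000 in
lemma M9_lt_top_of_far {z : EuclideanSpace ℝ (Fin 2)} {d : ℝ} (hd : 0 < d) (N : ℕ)
    (hfar : ∀ k, N ≤ k → ∀ w ∈ S9 (k+1), d ≤ dist z w) : M9 z < ⊤ := by
  set C : ℝ≥0∞ := (ENNReal.ofReal (d^2/4))⁻¹ with hC
  have hCtop : C ≠ ⊤ := by
    rw [hC]
    exact (ENNReal.inv_lt_top.mpr (by simp only [ENNReal.ofReal_pos]; positivity)).ne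
  set g : ℕ → ℝ≥0∞ := fun m => if m < N then ENNReal.ofReal ((2:ℝ)^((m:ℝ)+1))
    else ENNReal.ofReal ((2:ℝ)^((m:ℝ)+1)) * ENNReal.ofReal ((2:ℝ)^(-((m:ℝ)+1)^2)) * C
    with hg
  -- Step 1 : M9 z ≤ ∑' g
  have step1 : M9 z ≤ ∑' m, g m := by
    rw [M9]
    apply iSup_le; intro c
    apply iSup_le; intro s
    apply iSup_le; intro hzB
    have hspos : 0 < s := lt_of_le_of_lt dist_nonneg (Metric.mem_ball.mp hzB)
    rw [lintegral_f9 measurableSet_ball, ← ENNReal.tsum_mul_left]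
    apply ENNReal.tsum_le_tsum
    intro m
    have hcast : ((m+1 : ℕ) : ℝ) = (m:ℝ) + 1 := by push_cast; ring
    by_cases hm : m < N
    · -- trivial bound
      rw [hg]
      simp only [hm, if_true]
      calc (μ9 (Metric.ball c s))⁻¹ * (ENNReal.ofReal ((2:ℝ)^((m:ℝ)+1))
            * μ9 (S9 (m + 1) ∩ Metric.ball c s))
          ≤ (μ9 (Metric.ball c s))⁻¹ * (ENNReal.ofReal ((2:ℝ)^((m:ℝ)+1))
            * μ9 (Metric.ball c s)) := by
            exact mul_le_mul' le_rfl (mul_le_mul' le_rfl (measure_mono Set.inter_subset_right))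
        _ = ENNReal.ofReal ((2:ℝ)^((m:ℝ)+1))
            * ((μ9 (Metric.ball c s))⁻¹ * μ9 (Metric.ball c s)) := by ring
        _ = ENNReal.ofReal ((2:ℝ)^((m:ℝ)+1)) := by
            rw [ENNReal.inv_mul_cancel (μ9_ball_ne_zero hspos) (μ9_ball_ne_top c s), mul_one]
    · rw [hg]
      simp only [hm, if_false]
      by_cases hint : S9 (m + 1) ∩ Metric.ball c s = ∅
      · simp only [hint, measure_empty, mul_zero]
        positivity
      · obtain ⟨w, hwS, hwB⟩ := Set.nonempty_iff_ne_empty.mpr hint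
        have hdw : d ≤ dist z w := hfar m (by omega) w hwS
        have hs2 : d/2 < s := by
          have h1 : dist z w ≤ dist z c + dist c w := dist_triangle z c w
          have h2 : dist z c < s := Metric.mem_ball.mp hzB
          have h3 : dist c w < s := by
            rw [dist_comm]; exact Metric.mem_ball.mp hwB
          linarith
        have hvol : ENNReal.ofReal (d^2/4) ≤ μ9 (Metric.ball c s) := by
          calc ENNReal.ofReal (d^2/4) ≤ ENNReal.ofReal (s^2) := by
                apply ENNReal.ofReal_le_ofReal; nlinarith
            _ ≤ volume (Metric.ball c s) := vol_ball_ge hspos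
            _ ≤ μ9 (Metric.ball c s) := vol_le_μ9 _
        have hμS : μ9 (S9 (m + 1) ∩ Metric.ball c s)
            ≤ ENNReal.ofReal ((2:ℝ)^(-((m:ℝ)+1)^2)) := by
          calc μ9 (S9 (m + 1) ∩ Metric.ball c s) ≤ μ9 (S9 (m+1)) :=
                measure_mono Set.inter_subset_left
            _ = ENNReal.ofReal ((2:ℝ)^(-((m:ℝ)+1)^2)) := by rw [μ9_S9, hcast]
        calc (μ9 (Metric.ball c s))⁻¹ * (ENNReal.ofReal ((2:ℝ)^((m:ℝ)+1))
              * μ9 (S9 (m + 1) ∩ Metric.ball c s))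
            ≤ C * (ENNReal.ofReal ((2:ℝ)^((m:ℝ)+1))
              * ENNReal.ofReal ((2:ℝ)^(-((m:ℝ)+1)^2))) := by
              apply mul_le_mul'
              · rw [hC]; exact ENNReal.inv_le_inv.mpr hvol
              · exact mul_le_mul' le_rfl hμS
          _ = ENNReal.ofReal ((2:ℝ)^((m:ℝ)+1)) * ENNReal.ofReal ((2:ℝ)^(-((m:ℝ)+1)^2)) * C := by
              ring
  -- Step 2 : ∑' g < ⊤
  have step2 : ∑' m, g m < ⊤ := by
    have hle : ∀ m, g m ≤ (if m < N then ENNReal.ofReal ((2:ℝ)^((m:ℝ)+1)) else 0)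
        + ENNReal.ofReal ((1/2:ℝ)^m) * C := by
      intro m
      rw [hg]
      by_cases hm : m < N
      · simp only [hm, if_true]
        exact le_add_right le_rfl
      · simp only [hm, if_false, zero_add]
        exact mul_le_mul' (term_le m) le_rfl
    calc ∑' m, g m ≤ ∑' m, ((if m < N then ENNReal.ofReal ((2:ℝ)^((m:ℝ)+1)) else 0)
          + ENNReal.ofReal ((1/2:ℝ)^m) * C) := ENNReal.tsum_le_tsum hle
      _ = (∑' m, (if m < N then ENNReal.ofReal ((2:ℝ)^((m:ℝ)+1)) else 0))
          + ∑' m, ENNReal.ofReal ((1/2:ℝ)^m) * C := ENNReal.tsum_add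
      _ < ⊤ := by
          apply ENNReal.add_lt_top.mpr
          constructor
          · rw [tsum_eq_sum (s := Finset.range N) (by
              intro m hm
              simp only [Finset.mem_range] at hm
              simp only [hm, if_false])]
            apply ENNReal.sum_lt_top.mpr
            intro m _
            split <;> [exact ENNReal.ofReal_lt_top; exact ENNReal.zero_lt_top]
          · rw [ENNReal.tsum_mul_right, tsum_half_le]
            exact ENNReal.mul_lt_top (by norm_num) hCtop.lt_top
    
  exact lt_of_le_of_lt step1 step2

lemma dist_coord1 (z w : EuclideanSpace ℝ (Fin 2)) : |z 1 - w 1| ≤ dist z w := by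
  rw [dist_E2, ← Real.sqrt_sq_eq_abs]
  exact Real.sqrt_le_sqrt (by nlinarith [sq_nonneg (z 0 - w 0)])

lemma dist_coord0 (z w : EuclideanSpace ℝ (Fin 2)) : |z 0 - w 0| ≤ dist z w := by
  rw [dist_E2, ← Real.sqrt_sq_eq_abs]
  exact Real.sqrt_le_sqrt (by nlinarith [sq_nonneg (z 1 - w 1)])

lemma M9_lt_top {z : EuclideanSpace ℝ (Fin 2)} (hz : z ∉ A9) : M9 z < ⊤ := by
  by_cases hy : z 1 = 0
  · have hx : z 0 ∉ Set.Icc (0:ℝ) 1 := fun h => hz ⟨h, hy⟩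
    rw [Set.mem_Icc, not_and_or] at hx
    push_neg at hx
    rcases hx with hx | hx
    · apply M9_lt_top_of_far (d := -(z 0)) (by linarith) 0
      intro k _ w hw
      have hw0 : w 0 ∈ Set.Icc (0:ℝ) 1 := hw.1
      calc -(z 0) ≤ |z 0 - w 0| := by
            rw [abs_sub_comm]
            refine le_trans ?_ (le_abs_self _)
            linarith [hw0.1]
        _ ≤ dist z w := dist_coord0 z w
    · apply M9_lt_top_of_far (d := z 0 - 1) (by linarith) 0
      intro k _ w hw
      have hw0 : w 0 ∈ Set.Icc (0:ℝ) 1 := hw.1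
      calc z 0 - 1 ≤ |z 0 - w 0| := by
            refine le_trans ?_ (le_abs_self _)
            linarith [hw0.2]
        _ ≤ dist z w := dist_coord0 z w
  · have habs : 0 < |z 1| := abs_pos.mpr hy
    obtain ⟨N, hN⟩ := exists_pow_lt_of_lt_one (show (0:ℝ) < |z 1|/2 by linarith)
      (show (1/2 : ℝ) < 1 by norm_num)
    apply M9_lt_top_of_far (d := |z 1|/2) (by linarith) N
    intro k hk w hw
    have hw1 := hw.2
    have hK : ((k+1 : ℕ) : ℝ) = (k:ℝ) + 1 := by push_cast; ring
    have hw1pos : 0 < w 1 := by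
      have := hw1.1
      have h0 : (0:ℝ) < (2:ℝ) ^ (-((k+1 : ℕ) : ℝ) ^ 2) := Real.rpow_pos_of_pos (by norm_num) _
      linarith
    have hup : w 1 ≤ |z 1|/2 := by
      have e1 : (2:ℝ) ^ (-((k+1 : ℕ) : ℝ) ^ 2 + 1) ≤ (2:ℝ) ^ (-(k:ℝ)) := by
        apply Real.rpow_le_rpow_of_exponent_le (by norm_num)
        rw [hK]
        nlinarith [(Nat.cast_nonneg k : (0:ℝ) ≤ (k:ℝ))]
      have e2 : (2:ℝ) ^ (-(k:ℝ)) = (1/2 : ℝ)^k := by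
        rw [Real.rpow_neg (by norm_num), Real.rpow_natCast, one_div, inv_pow]
      have e3 : (1/2 : ℝ)^k ≤ (1/2 : ℝ)^N :=
        pow_le_pow_of_le_one (by norm_num) (by norm_num) hk
      have := hw1.2
      linarith
    calc |z 1|/2 ≤ |z 1| - w 1 := by linarith
      _ ≤ |z 1| - |w 1| := by rw [abs_of_pos hw1pos]
      _ ≤ |z 1 - w 1| := abs_sub_abs_le_abs_sub _ _
      _ ≤ dist z w := dist_coord1 z w

theorem stmt_9 :
    Integrable f9 μ9 ∧
    (∫⁻ z, ENNReal.ofReal |f9 z| ∂μ9) ≤ 2 ∧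
    HasCompactSupport f9 ∧
    (∀ x ∈ Set.Icc (0 : ℝ) 1, M9 (pt9 x 0) = ⊤) ∧
    (∀ z, z ∉ A9 → M9 z < ⊤) :=
  ⟨f9_integrable, lintegral_f9_total_le, f9_compact_support,
    fun _ hx => M9_top hx, fun _ hz => M9_lt_top hz⟩
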